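/- The map ι satisfies ⟨ι(x), ι(y)⟩ = −⟨x,y⟩ for all x, y ∈ P⊗ℚ (so ι is an isometric embedding of P with its form negated); ι(P) ⊆ N; and ι(P) = {v ∈ N : ⟨v, Ẽ_j^(k)⟩ = 0 for all j ∈ {10,11,12} and k ∈ {1,2}}. In particular, ι(P) is a primitive sublattice of N, and it equals the ℤ-span of {Ẽ_j^(ℓ) : 1 ≤ j ≤ 9, ℓ ∈ {1,2}} together with w₁, w₂, w₃. -/

import Mathlib

noncomputable section

abbrev F3 : Type := ZMod 3 × ZMod 3
abbrev IP : Type := F3 × Fin 2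
abbrev VP : Type := IP → ℚ

/-- The basis vectors `E_t^(k)` (with `k : Fin 2` corresponding to `k+1 ∈ {1,2}`). -/
def Ev (t : F3) (k : Fin 2) : VP := Pi.single (t, k) 1

/-- Gram coefficients of the bilinear form on `V`. -/
def GP : IP → IP → ℚ := fun i j =>
  if i.1 = j.1 then (if i.2 = j.2 then -2 else 1) else 0

/-- The symmetric bilinear form on `V`. -/
def BP (x y : VP) : ℚ := ∑ i : IP, ∑ j : IP, x i * GP i j * y j

lemma BP_add_left (a b x : VP) : BP (a + b) x = BP a x + BP b x := by
  simp only [BP, Pi.add_apply, add_mul, Finset.sum_add_distrib]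

lemma BP_zsmul_left (c : ℤ) (a x : VP) : BP (c • a) x = c * BP a x := by
  simp only [BP, Pi.smul_apply, zsmul_eq_mul, Finset.mul_sum, mul_assoc]

lemma BP_zero_left (x : VP) : BP 0 x = 0 := by
  simp [BP]

/-- `E_t := E_t^(1) + 2·E_t^(2)`. -/
def EV (t : F3) : VP := Ev t 0 + 2 • Ev t 1

/-- The affine line in `𝔽₃²` through `p` with direction `d`. -/
def lineF (p d : F3) : Finset F3 := Finset.image (fun s : ZMod 3 => p + s • d) Finset.univ

def IsLine (L : Finset F3) : Prop := ∃ p d : F3, d ≠ 0 ∧ L = lineF p d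

def AreParallel (L L' : Finset F3) : Prop :=
  ∃ p p' d : F3, d ≠ 0 ∧ L = lineF p d ∧ L' = lineF p' d

/-- `e(L) := (1/3)·∑_{t∈L} E_t`. -/
def eL (L : Finset F3) : VP := (3 : ℚ)⁻¹ • ∑ t ∈ L, EV t

/-- Generators of the root lattice `R` of type `A₂⁹`. -/
def Rgen : Set VP := {x | ∃ t k, x = Ev t k}

/-- The root lattice `R`. -/
def Rlat : Submodule ℤ VP := Submodule.span ℤ Rgen

/-- The lattice `P`. -/
def Plat : Submodule ℤ VP :=
  Submodule.span ℤ (Rgen ∪ {x | ∃ L L', AreParallel L L' ∧ x = eL L - eL L'})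

/-- The dual lattice `Λ* = {v | ⟨v,λ⟩ ∈ ℤ for all λ ∈ Λ}`. -/
def dualP (Λ : Submodule ℤ VP) : Submodule ℤ VP where
  carrier := {v | ∀ x ∈ Λ, ∃ n : ℤ, BP v x = n}
  zero_mem' := fun x _ => ⟨0, by simp [BP_zero_left]⟩
  add_mem' := by
    intro a b ha hb x hx
    obtain ⟨n, hn⟩ := ha x hx
    obtain ⟨m, hm⟩ := hb x hx
    exact ⟨n + m, by rw [BP_add_left, hn, hm]; push_cast; ring⟩
  smul_mem' := by
    intro c v hv x hx
    obtain ⟨n, hn⟩ := hv x hx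
    exact ⟨c * n, by rw [BP_zsmul_left, hn]; push_cast; ring⟩

def L12 : Finset F3 := lineF (0, 0) (0, 1)
def L34 : Finset F3 := lineF (0, 0) (1, 0)
def L00 : Finset F3 := lineF (0, 0) (1, 1)

def p1 : VP := eL L34 + eL L00
def p2 : VP := eL L12 + eL L34
def p3 : VP := eL L12 + eL L00

def pv : Fin 3 → VP := ![p1, p2, p3]

abbrev JN : Type := Fin 12 × Fin 2
abbrev WN : Type := JN → ℚ

/-- The simple roots `Ẽ_j^(k)` (with `k : Fin 2` corresponding to `k+1 ∈ {1,2}`). -/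
def Et (j : Fin 12) (k : Fin 2) : WN := Pi.single (j, k) 1

/-- Gram coefficients of the (positive definite) bilinear form on `W`. -/
def GN : JN → JN → ℚ := fun i j =>
  if i.1 = j.1 then (if i.2 = j.2 then 2 else -1) else 0

/-- The symmetric bilinear form on `W`. -/
def BW (x y : WN) : ℚ := ∑ i : JN, ∑ j : JN, x i * GN i j * y j

/-- `Ẽ_j := Ẽ_j^(1) + 2·Ẽ_j^(2)`. -/
def EtV (j : Fin 12) : WN := Et j 0 + 2 • Et j 1

/-- The rows of the generating matrix of the glue code. -/
def glueMat : Fin 6 → Fin 12 → ℚ :=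
  ![![0, 1, 1, 1, 1, 1, 1, 0, 0, 0, 0, 0],
    ![-1, 0, 1, -1, -1, 1, 0, 1, 0, 0, 0, 0],
    ![-1, 1, 0, 1, -1, -1, 0, 0, 1, 0, 0, 0],
    ![-1, -1, 1, 0, 1, -1, 0, 0, 0, 1, 0, 0],
    ![-1, -1, -1, 1, 0, 1, 0, 0, 0, 0, 1, 0],
    ![-1, 1, -1, -1, 1, 0, 0, 0, 0, 0, 0, 1]]

/-- The glue vectors `w_i := (1/3)·∑_j a_{ij}·Ẽ_j`. -/
def wvec (i : Fin 6) : WN := (3 : ℚ)⁻¹ • ∑ j : Fin 12, glueMat i j • EtV j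

/-- The Niemeier lattice `N` of type `A₂¹²`. -/
def NL : Submodule ℤ WN :=
  Submodule.span ℤ ({x | ∃ j k, x = Et j k} ∪ Set.range wvec)

/-- The index of the `A₂`-block that `E_t` is sent to (0-indexed). -/
def iotaIdx : F3 → Fin 12 := fun t =>
  if t = (0, 0) then 5 else if t = (0, 1) then 3 else if t = (0, 2) then 6
  else if t = (1, 0) then 4 else if t = (1, 1) then 2 else if t = (1, 2) then 1
  else if t = (2, 0) then 7 else if t = (2, 1) then 0 else 8

/-- The sign with which `E_t^(ℓ)` is sent to `±Ẽ_{iotaIdx t}^(ℓ)`. -/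
def iotaSgn : F3 → ℚ := fun t => if t.1 = 1 then -1 else 1

/-- The ℚ-linear map `ι : P ⊗ ℚ → W` of the proposition. -/
def iota : VP →ₗ[ℚ] WN :=
  (Pi.basisFun ℚ IP).constr ℚ fun i => iotaSgn i.1 • Et (iotaIdx i.1) i.2

/-!
`ι` sends the two roots of the block `t` to `±` the two roots of the block `iotaIdx t`, with
distinct blocks for distinct `t`, so it reverses the form block by block.

Let `Λ` be the span of the roots of the first nine blocks and of `w₁, w₂, w₃`, and `U` the
ℚ-span of the first nine blocks. An element of `N` is a root-lattice vector plus `∑ mᵢ wᵢ`;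
the glue rows carry an identity block in columns 7–12, so vanishing on the blocks 10–12 forces
`3 ∣ mᵢ` for `i ≥ 4`, and those glue terms are roots. Hence `Λ = N ∩ U`, which gives primitivity,
and `U` is the orthogonal complement of the last three blocks since the `A₂` Gram matrix is
nondegenerate.

For `ι(P) = Λ`: the vectors `w₁, w₂, w₃` are images of differences of parallel
lines. Conversely `3 ι(e(L) − e(L₀))` is the code word of `L − L₀`, which is congruent mod 3 to
the combination of the glue rows read off from its columns 7–9: a finite check over `𝔽₃²`.
-/

lemma BW_eq_toLinearMap₂' (x y : WN) : BW x y = Matrix.toLinearMap₂' ℚ (Matrix.of GN) x y := by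
  simp only [BW, Matrix.toLinearMap₂'_apply, Matrix.of_apply, smul_eq_mul]
  exact Finset.sum_congr rfl fun i _ => Finset.sum_congr rfl fun j _ => by ring

lemma BP_eq_toLinearMap₂' (x y : VP) : BP x y = Matrix.toLinearMap₂' ℚ (Matrix.of GP) x y := by
  simp only [BP, Matrix.toLinearMap₂'_apply, Matrix.of_apply, smul_eq_mul]
  exact Finset.sum_congr rfl fun i _ => Finset.sum_congr rfl fun j _ => by ring

lemma BW_Et_Et (j : Fin 12) (k : Fin 2) (j' : Fin 12) (k' : Fin 2) :
    BW (Et j k) (Et j' k') = GN (j, k) (j', k') := by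
  simp [BW, Et, Pi.single_apply]

lemma BP_single_single (i j : IP) : BP (Pi.single i 1) (Pi.single j 1) = GP i j := by
  simp [BP, Pi.single_apply]

lemma iotaIdx_injective : Function.Injective iotaIdx := by decide

lemma iotaIdx_lt_nine (t : F3) : (iotaIdx t : ℕ) < 9 := by
  revert t; decide

lemma iotaSgn_mul_self (t : F3) : iotaSgn t * iotaSgn t = 1 := by
  unfold iotaSgn; split_ifs <;> norm_num

lemma iota_single (i : IP) : iota (Pi.single i 1) = iotaSgn i.1 • Et (iotaIdx i.1) i.2 := by
  rw [iota, ← Pi.basisFun_apply, Module.Basis.constr_basis]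

lemma BW_iota_iota (x y : VP) : BW (iota x) (iota y) = -BP x y := by
  have h : (Matrix.toLinearMap₂' ℚ (Matrix.of GN)).compl₁₂ iota iota =
      -Matrix.toLinearMap₂' ℚ (Matrix.of GP) := by
    refine LinearMap.ext_basis (Pi.basisFun ℚ IP) (Pi.basisFun ℚ IP) fun i j => ?_
    simp only [LinearMap.compl₁₂_apply, Pi.basisFun_apply, iota_single, map_smul,
      LinearMap.smul_apply, LinearMap.neg_apply, smul_eq_mul, ← BW_eq_toLinearMap₂',
      ← BP_eq_toLinearMap₂', BW_Et_Et, BP_single_single, GN, GP, iotaIdx_injective.eq_iff]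
    split_ifs <;> simp_all [← mul_assoc, iotaSgn_mul_self]
  rw [BW_eq_toLinearMap₂', BP_eq_toLinearMap₂', ← LinearMap.compl₁₂_apply, h]
  rfl

def integralVectors : Submodule ℤ WN where
  carrier := {v | ∀ a, ∃ n : ℤ, v a = n}
  zero_mem' a := ⟨0, by simp⟩
  add_mem' {v w} hv hw a := by
    obtain ⟨m, hm⟩ := hv a
    obtain ⟨n, hn⟩ := hw a
    exact ⟨m + n, by simp [hm, hn]⟩
  smul_mem' c v hv a := by
    obtain ⟨n, hn⟩ := hv a
    exact ⟨c * n, by simp [hn]⟩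

def firstNineBlocks : Submodule ℚ WN where
  carrier := {v | ∀ a : JN, 9 ≤ (a.1 : ℕ) → v a = 0}
  zero_mem' _ _ := rfl
  add_mem' hv hw a ha := by simp [hv a ha, hw a ha]
  smul_mem' c v hv a ha := by simp [hv a ha]

def lowGlueLattice : Submodule ℤ WN :=
  Submodule.span ℤ
    ({x | ∃ (j : Fin 12) (k : Fin 2), (j : ℕ) < 9 ∧ x = Et j k} ∪ {wvec 0, wvec 1, wvec 2})

lemma Et_mem_integralVectors (j : Fin 12) (k : Fin 2) : Et j k ∈ integralVectors := fun a =>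
  ⟨if a = (j, k) then 1 else 0, by rw [Et, Pi.single_apply]; push_cast; rfl⟩

lemma EtV_mem_integralVectors (j : Fin 12) : EtV j ∈ integralVectors :=
  add_mem (Et_mem_integralVectors j 0) (nsmul_mem (Et_mem_integralVectors j 1) 2)

lemma Et_mem_firstNineBlocks {j : Fin 12} (hj : (j : ℕ) < 9) (k : Fin 2) :
    Et j k ∈ firstNineBlocks := fun a ha => by
  rw [Et, Pi.single_apply, if_neg]
  rintro rfl
  exact absurd hj (not_lt.mpr ha)

lemma mem_span_Et_of_mem_integralVectors {v : WN} (hv : v ∈ integralVectors)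
    (hv' : v ∈ firstNineBlocks) :
    v ∈ Submodule.span ℤ {x | ∃ (j : Fin 12) (k : Fin 2), (j : ℕ) < 9 ∧ x = Et j k} := by
  choose n hn using hv
  have hsum : v = ∑ a : JN, n a • Et a.1 a.2 := by
    conv_lhs => rw [← Finset.univ_sum_single v]
    refine Finset.sum_congr rfl fun a _ => ?_
    rw [hn, Et, ← Pi.single_smul, zsmul_eq_mul, mul_one]
  rw [hsum]
  refine Submodule.sum_mem _ fun a _ => ?_
  by_cases ha : (a.1 : ℕ) < 9
  · exact Submodule.smul_mem _ _ (Submodule.subset_span ⟨a.1, a.2, ha, rfl⟩)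
  · have : (n a : ℚ) = 0 := (hn a).symm.trans (hv' a (not_lt.mp ha))
    simp [Int.cast_eq_zero.mp this]

def glueVec : (Fin 12 → ℤ) →ₗ[ℤ] WN := Fintype.linearCombination ℤ fun j => (3 : ℚ)⁻¹ • EtV j

lemma glueVec_single (j : Fin 12) : glueVec (Pi.single j 1) = (3 : ℚ)⁻¹ • EtV j := by
  simp [glueVec]

lemma glueVec_apply (y : Fin 12 → ℤ) (j : Fin 12) (k : Fin 2) :
    glueVec y (j, k) = y j * ((k : ℕ) + 1) / 3 := by
  fin_cases k <;>
    simp [glueVec, Fintype.linearCombination_apply, Finset.sum_apply, EtV, Et, Pi.single_apply] <;>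
    ring

lemma glueVec_mem_integralVectors {y : Fin 12 → ℤ} (hy : ∀ j, 3 ∣ y j) :
    glueVec y ∈ integralVectors := by
  choose z hz using hy
  have : y = (3 : ℤ) • z := funext hz
  rw [this, map_smul, glueVec, Fintype.linearCombination_apply, Finset.smul_sum]
  refine Submodule.sum_mem _ fun j _ => ?_
  have : (3 : ℤ) • (3 : ℚ)⁻¹ • EtV j = EtV j := by
    rw [← Int.cast_smul_eq_zsmul ℚ, smul_smul]; norm_num
  rw [smul_comm, this]
  exact Submodule.smul_mem _ _ (EtV_mem_integralVectors j)

-- `glueMat` with integer entries, so that divisibility statements about it are decidable.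
def glueCode : Fin 6 → Fin 12 → ℤ :=
  ![![0, 1, 1, 1, 1, 1, 1, 0, 0, 0, 0, 0],
    ![-1, 0, 1, -1, -1, 1, 0, 1, 0, 0, 0, 0],
    ![-1, 1, 0, 1, -1, -1, 0, 0, 1, 0, 0, 0],
    ![-1, -1, 1, 0, 1, -1, 0, 0, 0, 1, 0, 0],
    ![-1, -1, -1, 1, 0, 1, 0, 0, 0, 0, 1, 0],
    ![-1, 1, -1, -1, 1, 0, 0, 0, 0, 0, 0, 1]]

lemma glueMat_eq_glueCode (i : Fin 6) (j : Fin 12) : glueMat i j = glueCode i j := by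
  fin_cases i <;> fin_cases j <;> norm_num [glueMat, glueCode]

lemma glueCode_natAdd_six (i' i : Fin 6) :
    glueCode i' (Fin.natAdd 6 i) = if i' = i then 1 else 0 := by
  revert i' i; decide

lemma glueCode_of_lt_three {i : Fin 6} (hi : (i : ℕ) < 3) {j : Fin 12} (hj : 9 ≤ (j : ℕ)) :
    glueCode i j = 0 := by
  revert i j; decide

lemma wvec_eq_glueVec (i : Fin 6) : wvec i = glueVec (glueCode i) := by
  simp only [wvec, glueVec, Fintype.linearCombination_apply, Finset.smul_sum, glueMat_eq_glueCode,
    Int.cast_smul_eq_zsmul, smul_comm _ (3 : ℚ)⁻¹]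

lemma wvec_mem_firstNineBlocks {i : Fin 6} (hi : (i : ℕ) < 3) : wvec i ∈ firstNineBlocks := by
  rintro ⟨j, k⟩ hj
  rw [wvec_eq_glueVec, glueVec_apply, glueCode_of_lt_three hi hj]
  simp

lemma three_dvd_of_sub_sum_wvec_mem {v : WN} (hv : v ∈ firstNineBlocks) {m : Fin 6 → ℤ}
    (hm : v - ∑ i, m i • wvec i ∈ integralVectors) {i : Fin 6} (hi : 3 ≤ (i : ℕ)) : 3 ∣ m i := by
  obtain ⟨n, hn⟩ := hm (Fin.natAdd 6 i, 0)
  have hcoord : ∀ i', wvec i' (Fin.natAdd 6 i, 0) = if i' = i then (3 : ℚ)⁻¹ else 0 := by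
    intro i'
    rw [wvec_eq_glueVec, glueVec_apply, glueCode_natAdd_six]
    split_ifs <;> simp
  rw [Pi.sub_apply, hv _ (by simp; omega), Finset.sum_apply] at hn
  simp only [Pi.smul_apply, hcoord, smul_ite, smul_zero, Finset.sum_ite_eq', Finset.mem_univ,
    if_true, zsmul_eq_mul] at hn
  exact ⟨-n, by exact_mod_cast (by linarith : (m i : ℚ) = 3 * -n)⟩

lemma mem_lowGlueLattice_of {v : WN} (hv : v ∈ firstNineBlocks) (m : Fin 6 → ℤ)
    (hm : v - ∑ i, m i • wvec i ∈ integralVectors) : v ∈ lowGlueLattice := by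
  set m' : Fin 6 → ℤ := fun i => if (i : ℕ) < 3 then m i else 0
  have hlow : ∑ i, m' i • wvec i ∈ lowGlueLattice := by
    refine Submodule.sum_mem _ fun i _ => ?_
    by_cases hi : (i : ℕ) < 3
    · refine Submodule.smul_mem _ _ (Submodule.subset_span (Or.inr ?_))
      fin_cases i <;> simp_all
    · simp [m', hi]
  have hint : v - ∑ i, m' i • wvec i ∈ integralVectors := by
    have : v - ∑ i, m' i • wvec i = (v - ∑ i, m i • wvec i) + ∑ i, (m i - m' i) • wvec i := by
      simp only [sub_smul, Finset.sum_sub_distrib]; abel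
    rw [this]
    refine add_mem hm (Submodule.sum_mem _ fun i _ => ?_)
    by_cases hi : (i : ℕ) < 3
    · simp [m', hi]
    · obtain ⟨k, hk⟩ := three_dvd_of_sub_sum_wvec_mem hv hm (not_lt.mp hi)
      rw [show m i - m' i = k * 3 by simp [m', hi, hk, mul_comm], mul_smul]
      refine Submodule.smul_mem _ _ ?_
      rw [wvec_eq_glueVec, ← map_smul]
      exact glueVec_mem_integralVectors fun j => by simp
  have hsupp : v - ∑ i, m' i • wvec i ∈ firstNineBlocks := by
    refine sub_mem hv (Submodule.sum_mem _ fun i _ => ?_)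
    by_cases hi : (i : ℕ) < 3
    · rw [← Int.cast_smul_eq_zsmul ℚ]
      exact Submodule.smul_mem _ _ (wvec_mem_firstNineBlocks hi)
    · simp [m', hi]
  have hspan := mem_span_Et_of_mem_integralVectors hint hsupp
  rw [← sub_add_cancel v (∑ i, m' i • wvec i)]
  exact add_mem (Submodule.span_mono Set.subset_union_left hspan) hlow

lemma lowGlueLattice_le_NL : lowGlueLattice ≤ NL := by
  refine Submodule.span_le.mpr ?_
  rintro x (⟨j, k, -, rfl⟩ | hx)
  · exact Submodule.subset_span (Or.inl ⟨j, k, rfl⟩)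
  · obtain rfl | rfl | rfl := hx <;> exact Submodule.subset_span (Or.inr ⟨_, rfl⟩)

lemma lowGlueLattice_le_firstNineBlocks :
    lowGlueLattice ≤ firstNineBlocks.restrictScalars ℤ := by
  refine Submodule.span_le.mpr ?_
  rintro x (⟨j, k, hj, rfl⟩ | hx)
  · exact Et_mem_firstNineBlocks hj k
  · obtain rfl | rfl | rfl := hx <;> exact wvec_mem_firstNineBlocks (by decide)

lemma exists_sub_sum_wvec_mem_of_mem_NL {v : WN} (hv : v ∈ NL) :
    ∃ m : Fin 6 → ℤ, v - ∑ i, m i • wvec i ∈ integralVectors := by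
  rw [NL, Submodule.span_union, Submodule.mem_sup] at hv
  obtain ⟨x, hx, y, hy, rfl⟩ := hv
  obtain ⟨m, rfl⟩ := (Submodule.mem_span_range_iff_exists_fun ℤ).mp hy
  have hEt : Submodule.span ℤ {x | ∃ j k, x = Et j k} ≤ integralVectors :=
    Submodule.span_le.mpr fun _ ⟨j, k, hx⟩ => hx ▸ Et_mem_integralVectors j k
  exact ⟨m, by simpa using hEt hx⟩

lemma lowGlueLattice_eq_NL_inf :
    lowGlueLattice = NL ⊓ firstNineBlocks.restrictScalars ℤ := by
  refine le_antisymm (le_inf lowGlueLattice_le_NL lowGlueLattice_le_firstNineBlocks) ?_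
  rintro v ⟨hN, hv⟩
  obtain ⟨m, hm⟩ := exists_sub_sum_wvec_mem_of_mem_NL hN
  exact mem_lowGlueLattice_of hv m hm

lemma BW_Et_right (v : WN) (j : Fin 12) (k : Fin 2) :
    BW v (Et j k) = 2 * v (j, k) - v (j, k + 1) := by
  fin_cases k <;>
    simp [BW, Et, Pi.single_apply, GN, Fintype.sum_prod_type, Fin.sum_univ_two] <;> ring

lemma mem_firstNineBlocks_iff (v : WN) :
    v ∈ firstNineBlocks ↔ ∀ j : Fin 12, 9 ≤ (j : ℕ) → ∀ k : Fin 2, BW v (Et j k) = 0 := by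
  refine ⟨fun hv j hj k => ?_, fun h a ha => ?_⟩
  · rw [BW_Et_right, hv (j, k) hj, hv (j, k + 1) hj]; ring
  · have h0 := BW_Et_right v a.1 0 ▸ h a.1 ha 0
    have h1 := BW_Et_right v a.1 1 ▸ h a.1 ha 1
    obtain ⟨j, k⟩ := a
    fin_cases k <;> simp at h0 h1 ⊢ <;> linarith

lemma eq_restrictScalars_span_inf_of_eq_inf {M : Type*} [AddCommGroup M] [Module ℚ M]
    {Λ N : Submodule ℤ M} {U : Submodule ℚ M} (h : Λ = N ⊓ U.restrictScalars ℤ) :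
    Λ = (Submodule.span ℚ (Λ : Set M)).restrictScalars ℤ ⊓ N := by
  refine le_antisymm (le_inf (fun x hx => Submodule.subset_span hx) (h ▸ inf_le_left)) ?_
  have hU : Submodule.span ℚ (Λ : Set M) ≤ U :=
    Submodule.span_le.mpr fun x hx => (h ▸ inf_le_right : Λ ≤ U.restrictScalars ℤ) hx
  rw [h]
  exact fun x ⟨hx, hN⟩ => ⟨hN, hU (h ▸ hx)⟩

def codeWord (L : Finset F3) : Fin 12 → ℤ :=
  ∑ t ∈ L, (if t.1 = 1 then -1 else 1) • Pi.single (iotaIdx t) 1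

lemma iota_Ev (t : F3) (k : Fin 2) : iota (Ev t k) = iotaSgn t • Et (iotaIdx t) k :=
  iota_single (t, k)

lemma iota_EV (t : F3) : iota (EV t) = iotaSgn t • EtV (iotaIdx t) := by
  simp only [EV, EtV, map_add, map_nsmul, iota_Ev, smul_add, smul_comm (iotaSgn t) (2 : ℕ)]

lemma iota_eL (L : Finset F3) : iota (eL L) = glueVec (codeWord L) := by
  simp only [eL, codeWord, map_smul, map_sum, iota_EV, glueVec_single, Finset.smul_sum]
  refine Finset.sum_congr rfl fun t _ => ?_
  rw [smul_comm, iotaSgn]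
  split_ifs <;> simp

lemma iota_mem_firstNineBlocks (x : VP) : iota x ∈ firstNineBlocks := by
  have : LinearMap.range iota ≤ firstNineBlocks := by
    rw [iota, Module.Basis.constr_range, Submodule.span_le]
    rintro _ ⟨i, rfl⟩
    exact Submodule.smul_mem _ _ (Et_mem_firstNineBlocks (iotaIdx_lt_nine i.1) i.2)
  exact this (LinearMap.mem_range_self iota x)

-- Column `6 + i` of `glueCode` is the `i`-th unit vector: `y` is congruent mod 3 to the
-- combination of glue rows that agrees with it on these columns.
lemma three_dvd_codeWord_line_sub : ∀ p d : F3, d ≠ 0 → ∀ j : Fin 12,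
    let y := codeWord (lineF p d) - codeWord (lineF 0 d)
    3 ∣ (y - ∑ i, y (Fin.natAdd 6 i) • glueCode i) j := by
  decide

lemma iota_eL_line_sub_mem (p d : F3) (hd : d ≠ 0) :
    iota (eL (lineF p d) - eL (lineF 0 d)) ∈ lowGlueLattice := by
  set y := codeWord (lineF p d) - codeWord (lineF 0 d)
  refine mem_lowGlueLattice_of (iota_mem_firstNineBlocks _) (fun i => y (Fin.natAdd 6 i)) ?_
  convert glueVec_mem_integralVectors (three_dvd_codeWord_line_sub p d hd) using 1
  simp only [y, map_sub, map_sum, map_zsmul, iota_eL, wvec_eq_glueVec]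

lemma iota_eL_sub_mem {L L' : Finset F3} (h : AreParallel L L') :
    iota (eL L - eL L') ∈ lowGlueLattice := by
  obtain ⟨p, p', d, hd, rfl, rfl⟩ := h
  rw [← sub_sub_sub_cancel_right _ _ (eL (lineF 0 d)), map_sub]
  exact sub_mem (iota_eL_line_sub_mem p d hd) (iota_eL_line_sub_mem p' d hd)

lemma exists_iotaIdx_eq {j : Fin 12} (hj : (j : ℕ) < 9) : ∃ t, iotaIdx t = j := by
  revert j; decide

lemma wvec_eq_iota_eL_sub {i : Fin 6} (p p' d : F3)
    (h : codeWord (lineF p d) - codeWord (lineF p' d) = glueCode i) :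
    wvec i = iota (eL (lineF p d) - eL (lineF p' d)) := by
  rw [map_sub, iota_eL, iota_eL, ← map_sub, h, wvec_eq_glueVec]

lemma map_iota_Plat_le : Plat.map (iota.restrictScalars ℤ) ≤ lowGlueLattice := by
  rw [Plat, Submodule.map_span, Submodule.span_le]
  rintro _ ⟨x, ⟨t, k, rfl⟩ | ⟨L, L', hLL', rfl⟩, rfl⟩
  · show iota (Ev t k) ∈ lowGlueLattice
    have hEt : Et (iotaIdx t) k ∈ lowGlueLattice :=
      Submodule.subset_span (Or.inl ⟨_, k, iotaIdx_lt_nine t, rfl⟩)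
    rw [iota_Ev, iotaSgn]
    split_ifs
    · simpa using neg_mem hEt
    · simpa using hEt
  · exact iota_eL_sub_mem hLL'

lemma lowGlueLattice_le_map_iota_Plat : lowGlueLattice ≤ Plat.map (iota.restrictScalars ℤ) := by
  have hP : ∀ x ∈ Plat, iota x ∈ Plat.map (iota.restrictScalars ℤ) := fun x hx => ⟨x, hx, rfl⟩
  have hline : ∀ p p' d : F3, d ≠ 0 → eL (lineF p d) - eL (lineF p' d) ∈ Plat :=
    fun p p' d hd => Submodule.subset_span (Or.inr ⟨_, _, ⟨p, p', d, hd, rfl, rfl⟩, rfl⟩)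
  refine Submodule.span_le.mpr ?_
  rintro _ (⟨j, k, hj, rfl⟩ | hw)
  · obtain ⟨t, rfl⟩ := exists_iotaIdx_eq hj
    have hEv : Ev t k ∈ Plat := Submodule.subset_span (Or.inl ⟨t, k, rfl⟩)
    by_cases ht : t.1 = 1
    · simpa [iota_Ev, iotaSgn, ht] using hP _ (neg_mem hEv)
    · simpa [iota_Ev, iotaSgn, ht] using hP _ hEv
  · obtain rfl | rfl | rfl := hw
    · rw [wvec_eq_iota_eL_sub (0, 0) (1, 0) (0, 1) (by decide)]
      exact hP _ (hline _ _ _ (by decide))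
    · rw [wvec_eq_iota_eL_sub (0, 0) (0, 1) (1, 0) (by decide)]
      exact hP _ (hline _ _ _ (by decide))
    · rw [wvec_eq_iota_eL_sub (0, 1) (0, 0) (1, 2) (by decide)]
      exact hP _ (hline _ _ _ (by decide))

lemma map_iota_Plat : Plat.map (iota.restrictScalars ℤ) = lowGlueLattice :=
  le_antisymm map_iota_Plat_le lowGlueLattice_le_map_iota_Plat

theorem statement8 :
    -- ι is an isometry onto its image, up to reversal of the signature
    (∀ x y : VP, BW (iota x) (iota y) = -BP x y) ∧
    -- ι(P) ⊆ N
    (Submodule.map (iota.restrictScalars ℤ) Plat ≤ NL) ∧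
    -- ι(P) = {v ∈ N : ⟨v, Ẽ_j^(k)⟩ = 0 for all j ∈ {10,11,12} and k ∈ {1,2}}
    ((Submodule.map (iota.restrictScalars ℤ) Plat : Set WN) =
      {v | v ∈ NL ∧ ∀ j : Fin 12, 9 ≤ (j : ℕ) → ∀ k : Fin 2, BW v (Et j k) = 0}) ∧
    -- in particular, ι(P) is a primitive sublattice of N ...
    (Submodule.map (iota.restrictScalars ℤ) Plat =
      (Submodule.span ℚ ((Submodule.map (iota.restrictScalars ℤ) Plat : Set WN))).restrictScalars ℤ
        ⊓ NL) ∧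
    -- ... and it is the ℤ-span of the Ẽ_j^(ℓ) with j ≤ 9 together with w₁, w₂, w₃
    (Submodule.map (iota.restrictScalars ℤ) Plat =
      Submodule.span ℤ
        ({x | ∃ (j : Fin 12) (k : Fin 2), (j : ℕ) < 9 ∧ x = Et j k} ∪ {wvec 0, wvec 1, wvec 2})) := by
  have himage := lowGlueLattice_eq_NL_inf
  rw [← map_iota_Plat] at himage
  refine ⟨BW_iota_iota, himage ▸ inf_le_left, ?_, eq_restrictScalars_span_inf_of_eq_inf himage,
    map_iota_Plat⟩
  ext v
  rw [himage]
  simp [mem_firstNineBlocks_iff]
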